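/- Let g = g_{5,3,2(λ)} and let F = (α, β, γ, δ, σ) ∈ g*. Then: (1) if γ = δ = σ = 0 then Ω_F = {F}; (2) if γ = δ = 0, σ ≠ 0 then Ω_F = {(α, y, 0, 0, s) : y ∈ ℝ, σs > 0}; (3) if γ = 0, δ ≠ 0, σ = 0 then Ω_F = {(α, y, 0, t, 0) : y ∈ ℝ, δt > 0}; (4) if γ = 0, δ ≠ 0, σ ≠ 0 then Ω_F = {(α, y, 0, t, s) : y ∈ ℝ, δt > 0, s = σ(t/δ)^{λ}}; (5) if γ ≠ 0, δ = σ = 0 then Ω_F = {(x, y, z, 0, 0) : y ∈ ℝ, γz > 0, x = α + γ − z}; (6) if γ ≠ 0, δ = 0, σ ≠ 0 then Ω_F = {(x, y, z, 0, s) : y ∈ ℝ, γz > 0, x = α + γ − z, s = σ(z/γ)^{λ}}; (7) if γ ≠ 0, δ ≠ 0, σ = 0 then Ω_F = {(x, y, z, t, 0) : y ∈ ℝ, δt > 0, x = α + γ − z and x = α + (1 − t/δ)γ}; (8) if γ ≠ 0, δ ≠ 0, σ ≠ 0 then Ω_F = {(x, y, z, t, s) : y ∈ ℝ, δt > 0,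 x = α + γ − z, x = α + (1 − t/δ)γ, s = σ(t/δ)^{λ}}. -/

import Mathlib

/-- The Lie bracket of g_{5,3,2(λ)}: [X1,X2] = X3, [X2,X3] = X3, [X2,X4] = X4, [X2,X5] = λ·X5,
written in coordinates with respect to the basis (X₁, X₂, X₃, X₄, X₅) (all other
brackets of basis vectors vanish); it is the bilinear extension of the structure
constants above. -/
def bracketg532 (l : ℝ) (U V : Fin 5 → ℝ) : Fin 5 → ℝ :=
  ![0, 0,
    (U 0 * V 1 - U 1 * V 0) + (U 1 * V 2 - U 2 * V 1),
    U 1 * V 3 - U 3 * V 1,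
    l * (U 1 * V 4 - U 4 * V 1)]

/-- The matrix of the adjoint endomorphism ad_U = [U, ·] in the basis (X₁, ..., X₅):
column j holds the coordinates of [U, Xⱼ]. -/
def adg532 (l : ℝ) (U : Fin 5 → ℝ) : Matrix (Fin 5) (Fin 5) ℝ :=
  Matrix.of fun i j => bracketg532 l U (Pi.single j 1) i

/-- The orbit Ω_F = { F ∘ exp(ad_U) : U ∈ g } in coordinates with respect to the dual
basis: a functional F' is identified with the vector (F'(X₁), ..., F'(X₅)), so that
F ∘ exp(ad_U) corresponds to the row-vector–matrix product vecMul F (exp (ad_U)). -/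
noncomputable def orbitg532 (l : ℝ) (F : Fin 5 → ℝ) : Set (Fin 5 → ℝ) :=
  Set.range fun U : Fin 5 → ℝ => Matrix.vecMul F (NormedSpace.exp (adg532 l U))

/-!
`ad_U` satisfies `ad_U² = D · ad_U` with `D = diag(0, 0, U₂, U₂, λU₂)`, so summing the exponential
series gives `exp(ad_U) = 1 + φ(D) · ad_U` with `φ(x) = (eˣ - 1)/x > 0`. Hence, with `u = e^{U₂}`,
`F ∘ exp(ad_U) = (α + γ - γu, y, γu, δu, σu^λ)`, where `y = β + γφ(U₂)(U₁ - U₃) - δφ(U₂)U₄ - σλφ(λU₂)U₅`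
is an arbitrary real number as soon as `(γ, δ, σ) ≠ 0`. Each case of the theorem is then the
reparametrisation `u = t/δ`, `u = z/γ` or `u = (s/σ)^{1/λ}` of the half-line `u > 0`.
-/

open Matrix Real Nat

noncomputable def expSubOneDiv (x : ℝ) : ℝ := if x = 0 then 1 else (exp x - 1) / x

lemma exp_eq_one_add_mul_expSubOneDiv (x : ℝ) : exp x = 1 + x * expSubOneDiv x := by
  rcases eq_or_ne x 0 with rfl | hx
  · simp
  · rw [expSubOneDiv, if_neg hx]; field_simp; ring

lemma expSubOneDiv_pos (x : ℝ) : 0 < expSubOneDiv x := by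
  rcases lt_trichotomy x 0 with hx | rfl | hx
  · rw [expSubOneDiv, if_neg hx.ne]
    exact div_pos_of_neg_of_neg (by linarith [exp_lt_one_iff.mpr hx]) hx
  · simp [expSubOneDiv]
  · rw [expSubOneDiv, if_neg hx.ne']
    exact div_pos (by linarith [one_lt_exp_iff.mpr hx]) hx

lemma hasSum_pow_div_factorial_succ (x : ℝ) :
    HasSum (fun n : ℕ => x ^ n / (n + 1)!) (expSubOneDiv x) := by
  rcases eq_or_ne x 0 with rfl | hx
  · convert hasSum_ite_eq 0 (1 : ℝ) using 1
    · funext n; cases n <;> simp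
    · simp [expSubOneDiv]
  · have hexp : HasSum (fun n : ℕ => x ^ (n + 1) / (n + 1)!) (exp x - 1) := by
      rw [exp_eq_exp_ℝ]
      simpa using (hasSum_nat_add_iff' 1).mpr (NormedSpace.expSeries_div_hasSum_exp x)
    rw [expSubOneDiv, if_neg hx]
    refine (hexp.div_const x).congr_fun fun n => ?_
    rw [pow_succ]; field_simp

lemma exists_mul_add_mul_add_mul_eq {a b c : ℝ} (h : a ≠ 0 ∨ b ≠ 0 ∨ c ≠ 0) (r : ℝ) :
    ∃ x y z, a * x + b * y + c * z = r := by
  rcases h with ha | hb | hc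
  · exact ⟨r / a, 0, 0, by field_simp; ring⟩
  · exact ⟨0, r / b, 0, by field_simp; ring⟩
  · exact ⟨0, 0, r / c, by field_simp; ring⟩

lemma exists_pos_iff_exists_mul_pos {c : ℝ} (hc : c ≠ 0) (P : ℝ → Prop) :
    (∃ u, 0 < u ∧ P u) ↔ ∃ t, 0 < c * t ∧ P (t / c) := by
  constructor
  · rintro ⟨u, hu, hP⟩
    exact ⟨c * u, by rw [← mul_assoc]; exact mul_pos (mul_self_pos.mpr hc) hu,
      by rwa [mul_div_cancel_left₀ _ hc]⟩
  · rintro ⟨t, ht, hP⟩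
    refine ⟨t / c, ?_, hP⟩
    rw [← mul_div_mul_left t c hc]
    exact div_pos ht (mul_self_pos.mpr hc)

lemma exists_pos_rpow_iff {l : ℝ} (hl : l ≠ 0) (P : ℝ → Prop) :
    (∃ u, 0 < u ∧ P (u ^ l)) ↔ ∃ v, 0 < v ∧ P v := by
  constructor
  · rintro ⟨u, hu, hP⟩
    exact ⟨u ^ l, rpow_pos_of_pos hu l, hP⟩
  · rintro ⟨v, hv, hP⟩
    exact ⟨v ^ l⁻¹, rpow_pos_of_pos hv _, by rwa [rpow_inv_rpow hv.le hl]⟩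

section
variable {n : Type*} [Fintype n] [DecidableEq n] {A : Matrix n n ℝ} {d : n → ℝ}

lemma Matrix.pow_succ_eq_diagonal_pow_mul (h : A * A = diagonal d * A) (k : ℕ) :
    A ^ (k + 1) = diagonal d ^ k * A := by
  induction k with
  | zero => simp
  | succ k ih => rw [pow_succ, ih, mul_assoc, h, ← mul_assoc, ← pow_succ]

theorem Matrix.exp_eq_one_add_diagonal_mul (h : A * A = diagonal d * A) :
    NormedSpace.exp A = 1 + diagonal (fun i => expSubOneDiv (d i)) * A := by
  rw [NormedSpace.exp_eq_tsum ℝ]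
  refine HasSum.tsum_eq ((hasSum_nat_add_iff' 1).mp ?_)
  have hterm (k : ℕ) : ((k + 1)! : ℝ)⁻¹ • A ^ (k + 1) =
      diagonal (fun i => d i ^ k / (k + 1)!) * A := by
    rw [pow_succ_eq_diagonal_pow_mul h, diagonal_pow, ← smul_mul_assoc, ← diagonal_smul]
    congr 2
    funext i
    simp [div_eq_inv_mul]
  simp only [Finset.range_one, Finset.sum_singleton, pow_zero, factorial_zero, cast_one, inv_one,
    one_smul, add_sub_cancel_left, hterm]
  exact ((Pi.hasSum.mpr fun i => hasSum_pow_div_factorial_succ (d i)).matrix_diagonal).mul_right A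
end

lemma adg532_eq (l : ℝ) (U : Fin 5 → ℝ) : adg532 l U =
    !![0, 0, 0, 0, 0;
       0, 0, 0, 0, 0;
       -U 1, U 0 - U 2, U 1, 0, 0;
       0, -U 3, 0, U 1, 0;
       0, -(l * U 4), 0, 0, l * U 1] := by
  ext i j
  fin_cases i <;> fin_cases j <;> simp [adg532, bracketg532, Pi.single_apply]; ring

lemma adg532_mul_self (l : ℝ) (U : Fin 5 → ℝ) :
    adg532 l U * adg532 l U = diagonal ![0, 0, U 1, U 1, l * U 1] * adg532 l U := by
  rw [adg532_eq]
  ext i j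
  fin_cases i <;> fin_cases j <;> simp [mul_apply, Fin.sum_univ_five]

lemma vecMul_exp_adg532 (l α β γ δ σ : ℝ) (U : Fin 5 → ℝ) :
    vecMul ![α, β, γ, δ, σ] (NormedSpace.exp (adg532 l U)) =
      ![α + γ - γ * exp (U 1),
        β + (γ * (U 0 - U 2) - δ * U 3) * expSubOneDiv (U 1)
          - σ * l * U 4 * expSubOneDiv (l * U 1),
        γ * exp (U 1), δ * exp (U 1), σ * exp (l * U 1)] := by
  rw [exp_eq_one_add_diagonal_mul (adg532_mul_self l U), adg532_eq]
  simp only [exp_eq_one_add_mul_expSubOneDiv]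
  ext j
  fin_cases j <;> simp [vecMul, dotProduct, Fin.sum_univ_five, -mul_eq_mul_left_iff] <;> ring

theorem orbitg532_of_gamma_delta_sigma_eq_zero (l α β : ℝ) :
    orbitg532 l ![α, β, 0, 0, 0] = {![α, β, 0, 0, 0]} := by
  simp [orbitg532, vecMul_exp_adg532]

theorem orbitg532_eq_setOf {l γ δ σ : ℝ} (hl : l ≠ 0) (h : γ ≠ 0 ∨ δ ≠ 0 ∨ σ ≠ 0) (α β : ℝ) :
    orbitg532 l ![α, β, γ, δ, σ] =
      {p | ∃ y u, 0 < u ∧ p = ![α + γ - γ * u, y, γ * u, δ * u, σ * u ^ l]} := by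
  ext p
  constructor
  · rintro ⟨U, rfl⟩
    simp only [Set.mem_ofPred_eq, vecMul_exp_adg532]
    exact ⟨_, exp (U 1), exp_pos _, by rw [← exp_mul, mul_comm (U 1)]⟩
  · rintro ⟨y, u, hu, rfl⟩
    have hφ := expSubOneDiv_pos (log u)
    have hφl := expSubOneDiv_pos (l * log u)
    obtain ⟨a, d, e, hade⟩ := exists_mul_add_mul_add_mul_eq
      (a := γ * expSubOneDiv (log u)) (b := -δ * expSubOneDiv (log u))
      (c := -σ * l * expSubOneDiv (l * log u)) (by simpa [hφ.ne', hφl.ne', hl] using h) (y - β)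
    refine ⟨![a, log u, 0, d, e], ?_⟩
    simp only [vecMul_exp_adg532, Fin.isValue, cons_val_one, cons_val_zero, cons_val, exp_log hu,
      sub_zero, rpow_def_of_pos hu, mul_comm (log u), vecCons_inj, and_true, true_and]
    linear_combination hade

theorem orbitg532_of_gamma_delta_eq_zero {l σ : ℝ} (hl : l ≠ 0) (α β : ℝ) (hσ : σ ≠ 0) :
    orbitg532 l ![α, β, 0, 0, σ] = {p | ∃ y s : ℝ, σ * s > 0 ∧ p = ![α, y, 0, 0, s]} := by
  rw [orbitg532_eq_setOf hl (by simp [hσ])]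
  ext p
  simp only [zero_mul, add_zero, sub_zero, Set.mem_ofPred_eq]
  refine exists_congr fun y => ?_
  rw [exists_pos_rpow_iff hl (fun v => p = ![α, y, 0, 0, σ * v]), exists_pos_iff_exists_mul_pos hσ]
  simp only [mul_div_cancel₀ _ hσ, gt_iff_lt]

theorem orbitg532_of_delta_eq_zero {l γ σ : ℝ} (hl : l ≠ 0) (α β : ℝ) (hγ : γ ≠ 0) :
    orbitg532 l ![α, β, γ, 0, σ] = {p | ∃ x y z s : ℝ, γ * z > 0 ∧ x = α + γ - z ∧
      s = σ * (z / γ) ^ l ∧ p = ![x, y, z, 0, s]} := by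
  rw [orbitg532_eq_setOf hl (by simp [hγ])]
  ext p
  simp [exists_pos_iff_exists_mul_pos hγ, mul_div_cancel₀ _ hγ]

theorem orbitg532_of_delta_ne_zero {l γ δ σ : ℝ} (hl : l ≠ 0) (α β : ℝ) (hδ : δ ≠ 0) :
    orbitg532 l ![α, β, γ, δ, σ] = {p | ∃ x y z t s : ℝ, δ * t > 0 ∧ x = α + γ - z ∧
      x = α + (1 - t / δ) * γ ∧ s = σ * (t / δ) ^ l ∧ p = ![x, y, z, t, s]} := by
  have hz (z t : ℝ) : α + γ - z = α + (1 - t / δ) * γ ↔ z = γ * (t / δ) := by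
    constructor <;> intro h <;> linarith
  rw [orbitg532_eq_setOf hl (by simp [hδ])]
  ext p
  simp [exists_pos_iff_exists_mul_pos hδ, mul_div_cancel₀ _ hδ, hz]

theorem kOrbits_g532_general (l α β γ δ σ : ℝ) (hl0 : l ≠ 0) :
    (γ = 0 → δ = 0 → σ = 0 → orbitg532 l ![α, β, γ, δ, σ] = {![α, β, γ, δ, σ]}) ∧
    (γ = 0 → δ = 0 → σ ≠ 0 → orbitg532 l ![α, β, γ, δ, σ] = {p | ∃ y s : ℝ, σ * s > 0 ∧ p = ![α, y, 0, 0, s]}) ∧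
    (γ = 0 → δ ≠ 0 → σ = 0 → orbitg532 l ![α, β, γ, δ, σ] = {p | ∃ y t : ℝ, δ * t > 0 ∧ p = ![α, y, 0, t, 0]}) ∧
    (γ = 0 → δ ≠ 0 → σ ≠ 0 → orbitg532 l ![α, β, γ, δ, σ] = {p | ∃ y t s : ℝ, δ * t > 0 ∧ s = σ * (t / δ) ^ l ∧ p = ![α, y, 0, t, s]}) ∧
    (γ ≠ 0 → δ = 0 → σ = 0 → orbitg532 l ![α, β, γ, δ, σ] = {p | ∃ x y z : ℝ, γ * z > 0 ∧ x = α + γ - z ∧ p = ![x, y, z, 0, 0]}) ∧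
    (γ ≠ 0 → δ = 0 → σ ≠ 0 → orbitg532 l ![α, β, γ, δ, σ] = {p | ∃ x y z s : ℝ, γ * z > 0 ∧ x = α + γ - z ∧ s = σ * (z / γ) ^ l ∧ p = ![x, y, z, 0, s]}) ∧
    (γ ≠ 0 → δ ≠ 0 → σ = 0 → orbitg532 l ![α, β, γ, δ, σ] = {p | ∃ x y z t : ℝ, δ * t > 0 ∧ x = α + γ - z ∧ x = α + (1 - t / δ) * γ ∧ p = ![x, y, z, t, 0]}) ∧
    (γ ≠ 0 → δ ≠ 0 → σ ≠ 0 → orbitg532 l ![α, β, γ, δ, σ] = {p | ∃ x y z t s : ℝ, δ * t > 0 ∧ x = α + γ - z ∧ x = α + (1 - t / δ) * γ ∧ s = σ * (t / δ) ^ l ∧ p = ![x, y, z, t, s]}) := by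
  refine ⟨?_, ?_, ?_, ?_, ?_, ?_, ?_, ?_⟩ <;> rintro hγ hδ hσ
  · subst hγ hδ hσ; exact orbitg532_of_gamma_delta_sigma_eq_zero l α β
  · subst hγ hδ; exact orbitg532_of_gamma_delta_eq_zero hl0 α β hσ
  · subst hγ hσ; simpa using orbitg532_of_delta_ne_zero hl0 α β (γ := 0) (σ := 0) hδ
  · subst hγ; simpa using orbitg532_of_delta_ne_zero hl0 α β (γ := 0) hδ
  · subst hδ hσ; simpa using orbitg532_of_delta_eq_zero hl0 α β (σ := 0) hγ
  · subst hδ; exact orbitg532_of_delta_eq_zero hl0 α β hγ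
  · subst hσ; simpa using orbitg532_of_delta_ne_zero hl0 α β (σ := 0) hδ
  · exact orbitg532_of_delta_ne_zero hl0 α β hδ

theorem kOrbits_g532 (l α β γ δ σ : ℝ) (hl0 : l ≠ 0) (hl1 : l ≠ 1) :
    (γ = 0 → δ = 0 → σ = 0 → orbitg532 l ![α, β, γ, δ, σ] = {![α, β, γ, δ, σ]}) ∧
    (γ = 0 → δ = 0 → σ ≠ 0 → orbitg532 l ![α, β, γ, δ, σ] = {p | ∃ y s : ℝ, σ * s > 0 ∧ p = ![α, y, 0, 0, s]}) ∧
    (γ = 0 → δ ≠ 0 → σ = 0 → orbitg532 l ![α, β, γ, δ, σ] = {p | ∃ y t : ℝ, δ * t > 0 ∧ p = ![α, y, 0, t, 0]}) ∧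
    (γ = 0 → δ ≠ 0 → σ ≠ 0 → orbitg532 l ![α, β, γ, δ, σ] = {p | ∃ y t s : ℝ, δ * t > 0 ∧ s = σ * (t / δ) ^ l ∧ p = ![α, y, 0, t, s]}) ∧
    (γ ≠ 0 → δ = 0 → σ = 0 → orbitg532 l ![α, β, γ, δ, σ] = {p | ∃ x y z : ℝ, γ * z > 0 ∧ x = α + γ - z ∧ p = ![x, y, z, 0, 0]}) ∧
    (γ ≠ 0 → δ = 0 → σ ≠ 0 → orbitg532 l ![α, β, γ, δ, σ] = {p | ∃ x y z s : ℝ, γ * z > 0 ∧ x = α + γ - z ∧ s = σ * (z / γ) ^ l ∧ p = ![x, y, z, 0, s]}) ∧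
    (γ ≠ 0 → δ ≠ 0 → σ = 0 → orbitg532 l ![α, β, γ, δ, σ] = {p | ∃ x y z t : ℝ, δ * t > 0 ∧ x = α + γ - z ∧ x = α + (1 - t / δ) * γ ∧ p = ![x, y, z, t, 0]}) ∧
    (γ ≠ 0 → δ ≠ 0 → σ ≠ 0 → orbitg532 l ![α, β, γ, δ, σ] = {p | ∃ x y z t s : ℝ, δ * t > 0 ∧ x = α + γ - z ∧ x = α + (1 - t / δ) * γ ∧ s = σ * (t / δ) ^ l ∧ p = ![x, y, z, t, s]}) :=
  kOrbits_g532_general l α β γ δ σ hl0
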